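/- A Tychonoff (completely regular Hausdorff) space X is sequentially Ascoli if and only if every k-continuous bounded map T : X → c₀ that is weakly continuous is continuous, where c₀ is the Banach space of real sequences converging to 0 with the supremum norm. -/

import Mathlib

open ZeroAtInfty

/-- A Tychonoff space `X` is *sequentially Ascoli* if every convergent sequence in
`C_k(X)` (i.e. `C(X, ℝ)` with the compact-open topology) is equicontinuous. -/
def IsSequentiallyAscoli (X : Type*) [TopologicalSpace X] : Prop :=
  ∀ (u : ℕ → C(X, ℝ)) (g : C(X, ℝ)),
    Filter.Tendsto u Filter.atTop (nhds g) → Equicontinuous fun n => ⇑(u n)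

/-!
As `c₀` carries the topology of uniform convergence on `ℕ`, a map `T : X → c₀` is continuous
exactly when its coordinates `x ↦ T x n` form an equicontinuous family.

If `X` is sequentially Ascoli and `T` is k-continuous and weakly continuous, the coordinates are
continuous, equicontinuous on every compact set and pointwise null, so by Ascoli they tend to `0`
in `C_k(X)`; hence they are equicontinuous and `T` is continuous.

Conversely, for `uₙ → g` in `C_k(X)` the clamped differences `max (-1) (min 1 (uₙ - g))` are
the coordinates of a bounded k-continuous map `T : X → c₀`, weakly continuous because every
functional on `c₀` is an `ℓ¹` sequence. Continuity of `T` makes the clamped differences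
equicontinuous, and near a point where `uₙ - g` is small the clamp is the identity.
-/

open Filter Topology Finset
open scoped UniformConvergence

namespace ZeroAtInftyContinuousMap

section Coordinates

variable {α β X : Type*} [TopologicalSpace α] [TopologicalSpace X]

theorem isInducing_ofFun_coeFn [PseudoMetricSpace β] [Zero β] :
    IsInducing (UniformFun.ofFun ∘ (⇑) : C₀(α, β) → α →ᵤ β) :=
  BoundedContinuousFunction.isInducing_coeFn.comp isometry_toBCF.isUniformInducing.isInducing

theorem continuousOn_iff_equicontinuousOn_apply [PseudoMetricSpace β] [Zero β]
    {T : X → C₀(α, β)} {s : Set X} :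
    ContinuousOn T s ↔ EquicontinuousOn (fun a x => T x a) s := by
  rw [isInducing_ofFun_coeFn.continuousOn_iff, equicontinuousOn_iff_continuousOn]
  rfl

theorem continuous_iff_equicontinuous_apply [PseudoMetricSpace β] [Zero β]
    {T : X → C₀(α, β)} :
    Continuous T ↔ Equicontinuous (fun a x => T x a) := by
  rw [isInducing_ofFun_coeFn.continuous_iff, equicontinuous_iff_continuous]
  rfl

variable [SeminormedAddCommGroup β]

theorem norm_apply_le (f : C₀(α, β)) (x : α) : ‖f x‖ ≤ ‖f‖ :=
  f.toBCF.norm_coe_le_norm x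

theorem norm_le {f : C₀(α, β)} {C : ℝ} (hC : 0 ≤ C) : ‖f‖ ≤ C ↔ ∀ x, ‖f x‖ ≤ C :=
  BoundedContinuousFunction.norm_le hC

variable (𝕜 : Type*) [NormedField 𝕜] [NormedSpace 𝕜 β]

noncomputable def evalCLM (x : α) : C₀(α, β) →L[𝕜] β :=
  LinearMap.mkContinuous
    { toFun f := f x
      map_add' _ _ := rfl
      map_smul' _ _ := rfl }
    1 fun f => by simpa using norm_apply_le f x

end Coordinates

section Sequences

variable {β X : Type*}

def ofTendsto [TopologicalSpace β] [Zero β] (f : ℕ → β) (hf : Tendsto f atTop (𝓝 0)) :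
    C₀(ℕ, β) :=
  ⟨⟨f, continuous_of_discreteTopology⟩, by rwa [cocompact_eq_atTop]⟩

theorem tendsto_apply_atTop [TopologicalSpace β] [Zero β] (f : C₀(ℕ, β)) :
    Tendsto f atTop (𝓝 0) := by
  simpa [cocompact_eq_atTop] using zero_at_infty f

def single [TopologicalSpace β] [Zero β] (n : ℕ) (b : β) : C₀(ℕ, β) :=
  ofTendsto (Pi.single n b) <| tendsto_const_nhds.congr' <| by
    filter_upwards [eventually_gt_atTop n] with m hm
    simp [hm.ne']

@[simp] theorem single_apply [TopologicalSpace β] [Zero β] (n : ℕ) (b : β) (m : ℕ) :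
    single n b m = (Pi.single n b : ℕ → β) m := rfl

variable [SeminormedAddCommGroup β]

theorem sum_single_apply (F : Finset ℕ) (y : ℕ → β) (m : ℕ) :
    (∑ n ∈ F, single n (y n)) m = if m ∈ F then y m else 0 := by
  let ev : C₀(ℕ, β) →+ β := ⟨⟨fun f => f m, rfl⟩, fun _ _ => rfl⟩
  change ev (∑ n ∈ F, single n (y n)) = _
  rw [map_sum]
  exact Finset.sum_pi_single m y F

theorem lipschitzWith_single (n : ℕ) : LipschitzWith 1 (single (β := β) n) := by
  refine LipschitzWith.of_dist_le_mul fun a b => ?_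
  rw [NNReal.coe_one, one_mul, dist_eq_norm, dist_eq_norm, norm_le (norm_nonneg _)]
  intro m
  rcases eq_or_ne m n with rfl | hm
  · simp
  · simp [hm]

theorem norm_sub_sum_single_le (y : C₀(ℕ, β)) (N : ℕ) {C : ℝ} (hC : 0 ≤ C)
    (h : ∀ n ≥ N, ‖y n‖ ≤ C) : ‖y - ∑ n ∈ range N, single n (y n)‖ ≤ C := by
  rw [norm_le hC]
  intro m
  simp only [coe_sub, Pi.sub_apply, sum_single_apply, mem_range]
  split_ifs with hm
  · simpa using hC
  · simpa using h m (not_lt.mp hm)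

theorem tendstoUniformlyOn_sum_single {T : X → C₀(ℕ, β)} {s : Set X}
    (hT : TendstoUniformlyOn (fun n x => T x n) 0 atTop s) :
    TendstoUniformlyOn (fun N x => ∑ n ∈ range N, single n (T x n)) T atTop s := by
  rw [Metric.tendstoUniformlyOn_iff] at hT ⊢
  intro ε hε
  obtain ⟨N₀, hN₀⟩ := eventually_atTop.mp (hT (ε / 2) (half_pos hε))
  filter_upwards [eventually_ge_atTop N₀] with N hN x hx
  rw [dist_eq_norm]
  refine (norm_sub_sum_single_le _ N (half_pos hε).le fun n hn => ?_).trans_lt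
    (half_lt_self hε)
  simpa using (hN₀ n (hN.trans hn) x hx).le

theorem tendsto_sum_single (y : C₀(ℕ, β)) :
    Tendsto (fun N => ∑ n ∈ range N, single n (y n)) atTop (𝓝 y) := by
  have hy : TendstoUniformlyOn (fun n (z : C₀(ℕ, β)) => z n) 0 atTop {y} :=
    tendstoUniformlyOn_singleton_iff_tendsto.mpr (tendsto_apply_atTop y)
  exact tendstoUniformlyOn_singleton_iff_tendsto.mp (tendstoUniformlyOn_sum_single (T := id) hy)

theorem continuousOn_of_tendstoUniformlyOn_apply [TopologicalSpace X] {T : X → C₀(ℕ, β)}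
    {s : Set X} (hcont : ∀ n, ContinuousOn (fun x => T x n) s)
    (hT : TendstoUniformlyOn (fun n x => T x n) 0 atTop s) : ContinuousOn T s :=
  (tendstoUniformlyOn_sum_single hT).continuousOn <| Frequently.of_forall fun _ =>
    continuousOn_finsetSum _ fun n _ =>
      (lipschitzWith_single n).continuous.comp_continuousOn (hcont n)

end Sequences

section Dual

theorem single_eq_smul (n : ℕ) (c : ℝ) : single n c = c • single n 1 := by
  ext m
  rcases eq_or_ne m n with rfl | hm
  · simp
  · simp [hm]

theorem summable_abs_apply_single (φ : C₀(ℕ, ℝ) →L[ℝ] ℝ) :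
    Summable fun n => |φ (single n 1)| := by
  refine summable_of_sum_le (c := ‖φ‖) (fun n => abs_nonneg _) fun F => ?_
  set s := ∑ n ∈ F, single n (SignType.sign (φ (single n 1)) : ℝ)
  have hs : ‖s‖ ≤ 1 := by
    refine (norm_le zero_le_one).mpr fun m => ?_
    rw [sum_single_apply]
    split_ifs
    · generalize SignType.sign (φ (single m 1)) = t
      cases t <;> simp
    · simp
  calc ∑ n ∈ F, |φ (single n 1)| = φ s := by
        simp only [s, map_sum, single_eq_smul _ (SignType.sign _ : ℝ), map_smul, smul_eq_mul,
          sign_mul_self]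
    _ ≤ ‖φ‖ * ‖s‖ := (le_abs_self _).trans (φ.le_opNorm s)
    _ ≤ ‖φ‖ := mul_le_of_le_one_right (norm_nonneg φ) hs

theorem hasSum_apply_single_mul (φ : C₀(ℕ, ℝ) →L[ℝ] ℝ) (y : C₀(ℕ, ℝ)) :
    HasSum (fun n => φ (single n 1) * y n) (φ y) := by
  have hsum : Summable fun n => φ (single n 1) * y n := by
    refine Summable.of_norm_bounded ((summable_abs_apply_single φ).mul_right ‖y‖) fun n => ?_
    rw [norm_mul, Real.norm_eq_abs]
    exact mul_le_mul_of_nonneg_left (norm_apply_le y n) (abs_nonneg _)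
  rw [hsum.hasSum_iff_tendsto_nat]
  convert (φ.continuous.tendsto y).comp (tendsto_sum_single y) using 2 with N
  simp [map_sum, single_eq_smul _ (y _), mul_comm]

theorem continuous_toWeakSpace_of_continuous_apply {X : Type*} [TopologicalSpace X]
    {T : X → C₀(ℕ, ℝ)} (hcont : ∀ n, Continuous fun x => T x n)
    (hbdd : ∃ C, ∀ x, ‖T x‖ ≤ C) :
    Continuous fun x => toWeakSpace ℝ C₀(ℕ, ℝ) (T x) := by
  obtain ⟨C, hC⟩ := hbdd
  refine WeakBilin.continuous_of_continuous_eval _ fun φ => ?_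
  change Continuous fun x => φ (T x)
  rw [funext fun x => (hasSum_apply_single_mul φ (T x)).tsum_eq.symm]
  refine continuous_tsum (fun n => continuous_const.mul (hcont n))
    ((summable_abs_apply_single φ).mul_right C) fun n x => ?_
  rw [norm_mul, Real.norm_eq_abs]
  exact mul_le_mul_of_nonneg_left ((norm_apply_le _ n).trans (hC x)) (abs_nonneg _)

end Dual

end ZeroAtInftyContinuousMap

theorem ContinuousMap.tendsto_nhds_iff_forall_tendsto_of_equicontinuousOn {ι X β : Type*}
    [TopologicalSpace X] [UniformSpace β] {F : ι → C(X, β)} {f : C(X, β)} {l : Filter ι}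
    (hF : ∀ K, IsCompact K → EquicontinuousOn (fun i => ⇑(F i)) K) :
    Tendsto F l (𝓝 f) ↔ ∀ x, Tendsto (fun i => F i x) l (𝓝 (f x)) := by
  rw [isUniformEmbedding_toUniformOnFunIsCompact.isInducing.tendsto_nhds_iff, ← tendsto_pi_nhds]
  exact EquicontinuousOn.tendsto_uniformOnFun_iff_pi (fun _ hK => hK)
    (Set.sUnion_eq_univ_iff.mpr fun x => ⟨{x}, isCompact_singleton, rfl⟩) hF l f

theorem EquicontinuousAt.add_continuousAt {ι X E : Type*} [TopologicalSpace X]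
    [SeminormedAddCommGroup E] {F : ι → X → E} {g : X → E} {x₀ : X}
    (hF : EquicontinuousAt F x₀) (hg : ContinuousAt g x₀) :
    EquicontinuousAt (fun i => F i + g) x₀ := by
  rw [Metric.equicontinuousAt_iff_right] at hF ⊢
  intro ε hε
  filter_upwards [hF (ε / 2) (half_pos hε), Metric.tendsto_nhds.mp hg (ε / 2) (half_pos hε)]
    with x hFx hgx i
  calc dist (F i x₀ + g x₀) (F i x + g x) ≤ dist (F i x₀) (F i x) + dist (g x₀) (g x) :=
        dist_add_add_le _ _ _ _
    _ < ε := by linarith [hFx i, dist_comm (g x) (g x₀)]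

noncomputable def clampUnit : C(ℝ, ℝ) :=
  ⟨fun t => Set.projIcc (-1) 1 (by norm_num) t,
    continuous_subtype_val.comp (continuous_projIcc (h := by norm_num))⟩

theorem clampUnit_apply (t : ℝ) : clampUnit t = Set.projIcc (-1 : ℝ) 1 (by norm_num) t := rfl

theorem abs_clampUnit_le_one (t : ℝ) : |clampUnit t| ≤ 1 :=
  abs_le.mpr (clampUnit_apply t ▸ (Set.projIcc (-1 : ℝ) 1 _ t).2)

theorem clampUnit_eq_self {t : ℝ} (ht : |t| ≤ 1) : clampUnit t = t := by
  rw [clampUnit_apply, Set.projIcc_of_mem _ (abs_le.mp ht)]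

theorem clampUnit_eq_self_of_abs_lt {t : ℝ} (ht : |clampUnit t| < 1) : clampUnit t = t := by
  refine clampUnit_eq_self (abs_le.mpr ⟨?_, ?_⟩) <;> by_contra! h
  · rw [clampUnit_apply, Set.projIcc_of_le_left _ h.le] at ht
    norm_num at ht
  · rw [clampUnit_apply, Set.projIcc_of_right_le _ h.le] at ht
    norm_num at ht

theorem equicontinuousAt_of_equicontinuousAt_clampUnit {ι X : Type*} [TopologicalSpace X]
    {h : ι → X → ℝ} {x₀ : X} (hcont : ∀ i, ContinuousAt (h i) x₀)
    (hx₀ : Tendsto (fun i => h i x₀) cofinite (𝓝 0))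
    (hclamp : EquicontinuousAt (fun i x => clampUnit (h i x)) x₀) :
    EquicontinuousAt h x₀ := by
  rw [Metric.equicontinuousAt_iff_right] at hclamp ⊢
  intro ε hε
  -- Outside the finitely many `i` with `|h i x₀| ≥ 1/3`, the clamp is the identity near `x₀`.
  have hfin : {i | ¬ |h i x₀| < 1 / 3}.Finite := by
    simpa [Real.dist_eq] using
      eventually_cofinite.mp (Metric.tendsto_nhds.mp hx₀ (1 / 3) (by norm_num))
  filter_upwards [hclamp (1 / 3) (by norm_num), hclamp ε hε,
    (eventually_all_finite hfin).mpr fun i _ => Metric.tendsto_nhds.mp (hcont i) ε hε]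
    with x hx hxε hxfin i
  by_cases hi : |h i x₀| < 1 / 3
  · have h₀ : clampUnit (h i x₀) = h i x₀ := clampUnit_eq_self (by linarith)
    have hx : clampUnit (h i x) = h i x := by
      refine clampUnit_eq_self_of_abs_lt ?_
      have := hx i
      rw [h₀, Real.dist_eq] at this
      linarith [abs_sub_abs_le_abs_sub (clampUnit (h i x)) (h i x₀),
        abs_sub_comm (h i x₀) (clampUnit (h i x))]
    simpa only [h₀, hx] using hxε i
  · exact dist_comm (h i x) (h i x₀) ▸ hxfin i hi

open ZeroAtInftyContinuousMap

theorem IsSequentiallyAscoli.continuous_of_continuous_apply {X : Type*} [TopologicalSpace X]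
    (hX : IsSequentiallyAscoli X) {T : X → C₀(ℕ, ℝ)}
    (hk : ∀ K, IsCompact K → ContinuousOn T K) (hcont : ∀ n, Continuous fun x => T x n) :
    Continuous T := by
  let u : ℕ → C(X, ℝ) := fun n => ⟨fun x => T x n, hcont n⟩
  have hu : Tendsto u atTop (𝓝 0) :=
    (ContinuousMap.tendsto_nhds_iff_forall_tendsto_of_equicontinuousOn fun K hK =>
      continuousOn_iff_equicontinuousOn_apply.mp (hk K hK)).mpr
      fun x => tendsto_apply_atTop (T x)
  exact continuous_iff_equicontinuous_apply.mpr (hX u 0 hu)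

theorem isSequentiallyAscoli_of_forall_continuous {X : Type*} [TopologicalSpace X]
    (h : ∀ T : X → C₀(ℕ, ℝ), (∀ K : Set X, IsCompact K → ContinuousOn T K) →
      (∃ C : ℝ, ∀ x : X, ‖T x‖ ≤ C) →
      (Continuous fun x => toWeakSpace ℝ C₀(ℕ, ℝ) (T x)) → Continuous T) :
    IsSequentiallyAscoli X := by
  intro u g hu x₀
  set v : ℕ → C(X, ℝ) := fun n => clampUnit.comp (u n - g)
  have hv : Tendsto v atTop (𝓝 0) := by
    have := ((ContinuousMap.continuous_postcomp clampUnit).tendsto _).comp (hu.sub_const g)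
    rwa [sub_self, show clampUnit.comp (0 : C(X, ℝ)) = 0 by ext; simp [clampUnit_eq_self]] at this
  let T (x : X) : C₀(ℕ, ℝ) :=
    ofTendsto (fun n => v n x) (((continuous_eval_const x).tendsto 0).comp hv)
  have hT_le_one (x : X) : ‖T x‖ ≤ 1 :=
    (norm_le zero_le_one).mpr fun n => abs_clampUnit_le_one _
  have hT : Continuous T := h T
    (fun K hK => continuousOn_of_tendstoUniformlyOn_apply (fun n => (v n).continuous.continuousOn)
      (ContinuousMap.tendsto_iff_forall_isCompact_tendstoUniformlyOn.mp hv K hK))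
    ⟨1, hT_le_one⟩
    (continuous_toWeakSpace_of_continuous_apply (fun n => (v n).continuous) ⟨1, hT_le_one⟩)
  have hux₀ : Tendsto (fun n => u n x₀ - g x₀) cofinite (𝓝 0) := by
    rw [Nat.cofinite_eq_atTop, ← sub_self (g x₀)]
    exact (((continuous_eval_const x₀).tendsto g).comp hu).sub_const (g x₀)
  have hsub : EquicontinuousAt (fun n => ⇑(u n - g)) x₀ :=
    equicontinuousAt_of_equicontinuousAt_clampUnit (fun n => (u n - g).continuous.continuousAt)
      hux₀ (continuous_iff_equicontinuous_apply.mp hT x₀)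
  simpa using hsub.add_continuousAt g.continuous.continuousAt

theorem sequentiallyAscoli_iff_c0_maps_continuous_general
    (X : Type*) [TopologicalSpace X] :
    IsSequentiallyAscoli X ↔
      ∀ T : X → C₀(ℕ, ℝ),
        -- `T` is k-continuous
        (∀ A : Set X, IsCompact A → ContinuousOn T A) →
        -- `T` is bounded
        (∃ C : ℝ, ∀ x : X, ‖T x‖ ≤ C) →
        -- `T` is weakly continuous
        (Continuous fun x => toWeakSpace ℝ C₀(ℕ, ℝ) (T x)) →
        Continuous T := by
  refine ⟨fun hX T hk _ hw => hX.continuous_of_continuous_apply hk fun n => ?_,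
    isSequentiallyAscoli_of_forall_continuous⟩
  exact (WeakBilin.eval_continuous _ (evalCLM ℝ n)).comp hw

theorem sequentiallyAscoli_iff_c0_maps_continuous
    (X : Type*) [TopologicalSpace X] [T35Space X] :
    IsSequentiallyAscoli X ↔
      ∀ T : X → C₀(ℕ, ℝ),
        -- `T` is k-continuous
        (∀ A : Set X, IsCompact A → ContinuousOn T A) →
        -- `T` is bounded
        (∃ C : ℝ, ∀ x : X, ‖T x‖ ≤ C) →
        -- `T` is weakly continuous
        (Continuous fun x => toWeakSpace ℝ C₀(ℕ, ℝ) (T x)) →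
        Continuous T :=
  sequentiallyAscoli_iff_c0_maps_continuous_general X
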